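/- Assume g(s) > 0 for all s ∈ (0, Δ). Then for every integer m ≥ 0, J_m(t₀, …, t_m) > 0 for every tuple with t_j > 0 for all j, Σ_{j=0}^{m−1} t_j < Δ, and t_m < τ (for m = 0 this reads: J_0(t₀) > 0 for all t₀ ∈ (0, τ)). In particular the joint interspike-interval density is strictly positive on its domain of validity. -/

import Mathlib

open Real Set Filter MeasureTheory

/-! The terms `I_i` with `i < m` and the atom `a * ∏ F` of `I_m` are nonnegative, being built from
nonnegative factors; it remains to see that the integral in `I_m` is positive. Its integrand
is bounded (`F t s ≤ λ² t` for `s ≥ 0`), hence integrable, and it is strictly positive on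
`(T_m, min Δ (T_m + t_m))`: there `g > 0`, the first `m` factors lie on the branch `t < s` of `F`,
and, since `t_m < τ`, the last one lies on the branch `s ≤ t ≤ s + τ`. -/

/-- Conditional ISI density `F t s` given time-to-live `s` of the feedback impulse. -/
noncomputable def F (lam τ t s : ℝ) : ℝ :=
  if 0 < t ∧ t < s then lam ^ 2 * t * Real.exp (-lam * t)
  else if s ≤ t ∧ t ≤ s + τ then
    (1 + lam * s) * Real.exp (-lam * s) * (lam ^ 2 * (t - s) * Real.exp (-lam * (t - s)))
  else 0

/-- Regular part of the stationary time-to-live density. -/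
noncomputable def g (lam A B s : ℝ) : ℝ := A + B * Real.exp (2 * lam * s)

/-- Weight of the singular (Dirac) part of the stationary time-to-live distribution. -/
noncomputable def aC (lam Δ : ℝ) : ℝ :=
  4 * Real.exp (2 * lam * Δ) / ((3 + 2 * lam * Δ) * Real.exp (2 * lam * Δ) + 1)

/-- `T t p q = Σ_{j=p}^{q-1} t_j` (empty sums are `0`). -/
def T {n : ℕ} (t : Fin n → ℝ) (p q : ℕ) : ℝ :=
  ∑ j : Fin n, if p ≤ (j : ℕ) ∧ (j : ℕ) < q then t j else 0

/-- `Ilow lam Δ τ A B i t` is the term `I_i`, `0 ≤ i ≤ m-1`, of the joint ISI density. -/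
noncomputable def Ilow (lam Δ τ A B : ℝ) {m : ℕ} (i : ℕ) (t : Fin (m + 1) → ℝ) : ℝ :=
  (∏ k : Fin (m + 1), if i + 1 ≤ (k : ℕ) then F lam τ (t k) (Δ - T t (i + 1) (k : ℕ)) else 1) *
    ∫ s in T t 0 i..T t 0 (i + 1),
      g lam A B s *
        ∏ k : Fin (m + 1), if (k : ℕ) ≤ i then F lam τ (t k) (s - T t 0 (k : ℕ)) else 1

/-- `Itop lam Δ τ A B t` is the term `I_m` of the joint ISI density. -/
noncomputable def Itop (lam Δ τ A B : ℝ) {m : ℕ} (t : Fin (m + 1) → ℝ) : ℝ :=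
  (∫ s in T t 0 m..Δ, g lam A B s * ∏ k : Fin (m + 1), F lam τ (t k) (s - T t 0 (k : ℕ)))
    + aC lam Δ * ∏ k : Fin (m + 1), F lam τ (t k) (Δ - T t 0 (k : ℕ))

/-- `J lam Δ τ A B t = Σ_{i=0}^{m} I_i(t)`, the joint density of `m+1` consecutive ISIs. -/
noncomputable def J (lam Δ τ A B : ℝ) {m : ℕ} (t : Fin (m + 1) → ℝ) : ℝ :=
  (∑ i ∈ Finset.range m, Ilow lam Δ τ A B i t) + Itop lam Δ τ A B t

section F

variable {lam τ t s : ℝ}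

lemma F_nonneg (hlam : 0 ≤ lam) (hs : 0 ≤ s) : 0 ≤ F lam τ t s := by
  unfold F
  split_ifs with h₁ h₂
  · have := h₁.1
    positivity
  · have := sub_nonneg.2 h₂.1
    positivity
  · exact le_rfl

lemma F_pos_of_lt (hlam : 0 < lam) (ht : 0 < t) (hts : t < s) : 0 < F lam τ t s := by
  rw [F, if_pos ⟨ht, hts⟩]
  positivity

lemma F_pos_of_lt_of_le (hlam : 0 < lam) (hs : 0 ≤ s) (hst : s < t) (htτ : t ≤ s + τ) :
    0 < F lam τ t s := by
  rw [F, if_neg (fun h ↦ hst.not_gt h.2), if_pos ⟨hst.le, htτ⟩]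
  have := sub_pos.2 hst
  positivity

lemma F_le (hlam : 0 ≤ lam) (ht : 0 ≤ t) (hs : 0 ≤ s) : F lam τ t s ≤ lam ^ 2 * t := by
  unfold F
  split_ifs with h₁ h₂
  · exact mul_le_of_le_one_right (by positivity) (exp_le_one_iff.2 (by nlinarith))
  · have hdecay : (1 + lam * s) * exp (-lam * s) ≤ 1 := by
      rw [neg_mul, exp_neg, ← div_eq_mul_inv, div_le_one (exp_pos _)]
      linarith [add_one_le_exp (lam * s)]
    have := sub_nonneg.2 h₂.1
    calc (1 + lam * s) * exp (-lam * s) * (lam ^ 2 * (t - s) * exp (-lam * (t - s)))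
        ≤ 1 * (lam ^ 2 * (t - s) * 1) := by
          gcongr
          exact exp_le_one_iff.2 (by nlinarith)
      _ ≤ lam ^ 2 * t := by nlinarith [sq_nonneg lam]
  · positivity

lemma measurable_F (lam τ t : ℝ) : Measurable (F lam τ t) := by
  refine Measurable.ite ?_ measurable_const (Measurable.ite ?_ (by fun_prop) measurable_const)
  · exact (MeasurableSet.const (0 < t)).inter measurableSet_Ioi
  · exact measurableSet_Iic.inter
      (measurableSet_le (α := ℝ) measurable_const (measurable_id.add_const τ))

end F

lemma continuous_g (lam A B : ℝ) : Continuous (g lam A B) := by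
  unfold g
  fun_prop

lemma aC_pos {lam Δ : ℝ} (h : 0 ≤ lam * Δ) : 0 < aC lam Δ := by
  unfold aC
  have := exp_pos (2 * lam * Δ)
  have : 0 ≤ 2 * lam * Δ := by linarith
  positivity

lemma nonneg_on_Icc_of_nonneg_on_Ioo {f : ℝ → ℝ} (hf : Continuous f) {a b : ℝ} (hab : a ≠ b)
    (h : ∀ x ∈ Ioo a b, 0 ≤ f x) : ∀ x ∈ Icc a b, 0 ≤ f x := by
  rw [← closure_Ioo hab]
  exact (isClosed_le continuous_const hf).closure_subset_iff.2 h

lemma intervalIntegral_pos_of_nonneg_of_pos_on_Ioo {f : ℝ → ℝ} {a b c : ℝ} (hab : a < b)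
    (hbc : b ≤ c) (hf : IntervalIntegrable f volume a c) (hnonneg : ∀ x ∈ Ioc a c, 0 ≤ f x)
    (hpos : ∀ x ∈ Ioo a b, 0 < f x) : 0 < ∫ x in a..c, f x :=
  calc 0 < ∫ x in a..b, f x :=
        intervalIntegral.intervalIntegral_pos_of_pos_on
          (hf.mono_set (uIcc_subset_uIcc_left (mem_uIcc_of_le hab.le hbc))) hpos hab
    _ ≤ ∫ x in a..c, f x :=
        intervalIntegral.integral_mono_interval le_rfl hab.le hbc
          (ae_restrict_of_forall_mem measurableSet_Ioc hnonneg) hf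

section T

variable {n : ℕ} (t : Fin n → ℝ)

lemma T_nonneg (ht : ∀ j, 0 ≤ t j) (p q : ℕ) : 0 ≤ T t p q :=
  Finset.sum_nonneg fun j _ ↦ by split_ifs; exacts [ht j, le_rfl]

lemma T_mono (ht : ∀ j, 0 ≤ t j) {p p' q q' : ℕ} (hp : p' ≤ p) (hq : q ≤ q') :
    T t p q ≤ T t p' q' :=
  Finset.sum_le_sum fun j _ ↦ by
    split_ifs with h₁ h₂
    exacts [le_rfl, absurd ⟨hp.trans h₁.1, h₁.2.trans_le hq⟩ h₂, ht j, le_rfl]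

lemma T_succ (k : Fin n) : T t 0 (k + 1) = T t 0 k + t k := by
  have hsummand : ∀ j : Fin n, (if 0 ≤ (j : ℕ) ∧ (j : ℕ) < k + 1 then t j else 0) =
      (if 0 ≤ (j : ℕ) ∧ (j : ℕ) < k then t j else 0) + if k = j then t j else 0 := by
    intro j
    rcases lt_trichotomy (j : ℕ) k with h | h | h
    · simp [h, h.trans (Nat.lt_succ_self _), Fin.ne_of_gt h]
    · simp [Fin.ext h]
    · simp [h.not_gt, Nat.succ_le_of_lt h |>.not_gt, Fin.ne_of_lt h]
  simp only [T, hsummand, Finset.sum_add_distrib, Finset.sum_ite_eq, Finset.mem_univ, if_true]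

end T

section Density

variable {lam Δ τ A B : ℝ} {m : ℕ} {t : Fin (m + 1) → ℝ}

lemma Ilow_nonneg (hlam : 0 ≤ lam) (ht : ∀ j, 0 ≤ t j) (hT : T t 0 m < Δ)
    (hg : ∀ s ∈ Ioo 0 Δ, 0 ≤ g lam A B s) {i : ℕ} (hi : i < m) : 0 ≤ Ilow lam Δ τ A B i t := by
  have hTi : T t 0 i ≤ T t 0 (i + 1) := T_mono t ht le_rfl i.le_succ
  have hTim : T t 0 (i + 1) ≤ T t 0 m := T_mono t ht le_rfl hi
  refine mul_nonneg (Finset.prod_nonneg fun k _ ↦ ?_) ?_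
  · have hTk : T t (i + 1) k ≤ T t 0 m := T_mono t ht (Nat.zero_le _) (Fin.is_le k)
    split_ifs
    exacts [F_nonneg hlam (by linarith), zero_le_one]
  rw [intervalIntegral.integral_of_le hTi]
  refine setIntegral_nonneg measurableSet_Ioc fun s hs ↦ mul_nonneg ?_ ?_
  · exact hg s ⟨(T_nonneg t ht 0 i).trans_lt hs.1, by linarith [hs.2]⟩
  · refine Finset.prod_nonneg fun k _ ↦ ?_
    split_ifs with hk
    exacts [F_nonneg hlam (sub_nonneg.2 ((T_mono t ht le_rfl hk).trans hs.1.le)), zero_le_one]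

lemma prod_F_nonneg (hlam : 0 ≤ lam) (ht : ∀ j, 0 ≤ t j) {s : ℝ} (hs : T t 0 m ≤ s) :
    0 ≤ ∏ k : Fin (m + 1), F lam τ (t k) (s - T t 0 k) :=
  Finset.prod_nonneg fun k _ ↦
    F_nonneg hlam (sub_nonneg.2 ((T_mono t ht le_rfl (Fin.is_le k)).trans hs))

lemma prod_F_pos (hlam : 0 < lam) (ht : ∀ j, 0 < t j) (hτ : t (Fin.last m) < τ) {s : ℝ}
    (hs : s ∈ Ioo (T t 0 m) (T t 0 m + t (Fin.last m))) :
    0 < ∏ k : Fin (m + 1), F lam τ (t k) (s - T t 0 k) := by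
  have ht' : ∀ j, 0 ≤ t j := fun j ↦ (ht j).le
  refine Finset.prod_pos fun k _ ↦ ?_
  induction k using Fin.lastCases with
  | last =>
    simp only [Fin.val_last]
    exact F_pos_of_lt_of_le hlam (by linarith [hs.1]) (by linarith [hs.2]) (by linarith [hs.1])
  | cast j =>
    have hstep := T_succ t j.castSucc
    have hle : T t 0 (j + 1) ≤ T t 0 m := T_mono t ht' le_rfl j.isLt
    simp only [Fin.val_castSucc] at hstep hle ⊢
    exact F_pos_of_lt hlam (ht _) (by linarith [hs.1])

lemma intervalIntegrable_Itop_integrand (hlam : 0 ≤ lam) (ht : ∀ j, 0 ≤ t j) (hT : T t 0 m ≤ Δ) :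
    IntervalIntegrable (fun s ↦ g lam A B s * ∏ k : Fin (m + 1), F lam τ (t k) (s - T t 0 k))
      volume (T t 0 m) Δ := by
  rw [intervalIntegrable_iff_integrableOn_Icc_of_le hT]
  refine IntegrableOn.continuousOn_mul (continuous_g lam A B).continuousOn ?_ isCompact_Icc
  refine Measure.integrableOn_of_bounded (M := ∏ k, lam ^ 2 * t k) measure_Icc_lt_top.ne
    (Finset.measurable_prod _ fun k _ ↦ (measurable_F lam τ (t k)).comp
      (measurable_id.sub_const _)).aestronglyMeasurable
    (ae_restrict_of_forall_mem measurableSet_Icc fun s hs ↦ ?_)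
  have hk : ∀ k : Fin (m + 1), 0 ≤ s - T t 0 k := fun k ↦
    sub_nonneg.2 ((T_mono t ht le_rfl (Fin.is_le k)).trans hs.1)
  rw [Real.norm_of_nonneg (Finset.prod_nonneg fun k _ ↦ F_nonneg hlam (hk k))]
  exact Finset.prod_le_prod (fun k _ ↦ F_nonneg hlam (hk k)) fun k _ ↦ F_le hlam (ht k) (hk k)

lemma Itop_pos (hlam : 0 < lam) (ht : ∀ j, 0 < t j) (hτ : t (Fin.last m) < τ) (hT : T t 0 m < Δ)
    (hg : ∀ s ∈ Ioo 0 Δ, 0 < g lam A B s) : 0 < Itop lam Δ τ A B t := by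
  have ht' : ∀ j, 0 ≤ t j := fun j ↦ (ht j).le
  have hT₀ : 0 ≤ T t 0 m := T_nonneg t ht' 0 m
  have hΔ : 0 < Δ := hT₀.trans_lt hT
  have hg' := nonneg_on_Icc_of_nonneg_on_Ioo (continuous_g lam A B) hΔ.ne fun s hs ↦ (hg s hs).le
  have hintegral : 0 < ∫ s in T t 0 m..Δ,
      g lam A B s * ∏ k : Fin (m + 1), F lam τ (t k) (s - T t 0 k) := by
    refine intervalIntegral_pos_of_nonneg_of_pos_on_Ioo (b := min Δ (T t 0 m + t (Fin.last m)))
      (lt_min hT (by linarith [ht (Fin.last m)])) (min_le_left _ _)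
      (intervalIntegrable_Itop_integrand hlam.le ht' hT.le) (fun s hs ↦ ?_) (fun s hs ↦ ?_)
    · exact mul_nonneg (hg' s ⟨hT₀.trans hs.1.le, hs.2⟩) (prod_F_nonneg hlam.le ht' hs.1.le)
    · have hsb := lt_min_iff.1 hs.2
      exact mul_pos (hg s ⟨hT₀.trans_lt hs.1, hsb.1⟩) (prod_F_pos hlam ht hτ ⟨hs.1, hsb.2⟩)
  exact add_pos_of_pos_of_nonneg hintegral
    (mul_nonneg (aC_pos (by positivity)).le (prod_F_nonneg hlam.le ht' hT.le))

end Density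

theorem stmt13_general (lam Δ τ A B : ℝ) (hlam : 0 < lam)
    (hg : ∀ s ∈ Set.Ioo (0 : ℝ) Δ, 0 < g lam A B s) :
    ∀ m : ℕ, ∀ t : Fin (m + 1) → ℝ,
      (∀ j, 0 < t j) → T t 0 m < Δ → t (Fin.last m) < τ →
        0 < J lam Δ τ A B t := by
  intro m t ht hT hτ
  refine add_pos_of_nonneg_of_pos (Finset.sum_nonneg fun i hi ↦ ?_) (Itop_pos hlam ht hτ hT hg)
  exact Ilow_nonneg hlam.le (fun j ↦ (ht j).le) hT (fun s hs ↦ (hg s hs).le)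
    (Finset.mem_range.1 hi)

/-- if `g > 0` on `(0, Δ)`, then for every `m ≥ 0` the joint density `J_m`
is strictly positive on its domain of validity
`{t_j > 0 ∀ j, Σ_{j=0}^{m−1} t_j < Δ, t_m < τ}` (for `m = 0` this is `J_0 > 0` on `(0,τ)`). -/
theorem stmt13 (lam Δ τ A B : ℝ) (hlam : 0 < lam) (hΔ : 0 < Δ) (hΔτ : Δ < τ)
    (hg : ∀ s ∈ Set.Ioo (0 : ℝ) Δ, 0 < g lam A B s) :
    ∀ m : ℕ, ∀ t : Fin (m + 1) → ℝ,
      (∀ j, 0 < t j) → T t 0 m < Δ → t (Fin.last m) < τ →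
        0 < J lam Δ τ A B t :=
  stmt13_general lam Δ τ A B hlam hg
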